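/- arXiv:2407.15058 — 5 statements merged into one kernel-verified Lean document; each statement's English description precedes it below -/
import Mathlib

section
/- Assume that hypothesis (AC) holds and that ℰ is compact in 𝒵. Then the attainable set 𝒴_∞ is compact in 𝒳 and is invariant under S, in the sense that S(𝒴_∞ × ℰ) ⊆ 𝒴_∞. -/
open MeasureTheory ProbabilityTheory Filter
open scoped NNReal ENNReal Topology

noncomputable section

/-- Trajectory of the random dynamical system `x_{n+1} = S x_n ζ_n` started at `x`. -/
def traj {X Z : Type*} (S : X → Z → X) (x : X) (ζ : ℕ → Z) : ℕ → X
  | 0 => x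
  | n + 1 => S (traj S x ζ n) (ζ n)

/-- Support of a measure on a metric space: points all of whose balls have positive measure. -/
def msupport {Z : Type*} [PseudoMetricSpace Z] [MeasurableSpace Z] (ℓ : Measure Z) : Set Z :=
  {z | ∀ ε : ℝ, 0 < ε → 0 < ℓ (Metric.ball z ε)}

/-- The attainable set `𝒴_n` in `n` steps from `Y`, with noises taken in `E`. -/
def attain {X Z : Type*} (S : X → Z → X) (E : Set Z) (Y : Set X) (n : ℕ) : Set X :=
  {y | ∃ x ∈ Y, ∃ ζ : ℕ → Z, (∀ k < n, ζ k ∈ E) ∧ y = traj S x ζ n}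

/-- The attainable set `𝒴_∞`: closure of the union of the `𝒴_n`. -/
def attainInf {X Z : Type*} [TopologicalSpace X] (S : X → Z → X) (E : Set Z) (Y : Set X) :
    Set X :=
  closure (⋃ n : ℕ, attain S E Y n)

/-- The law `P_n(x, ·)` of `x_n` started at `x`, where the noise is the i.i.d. sequence `ξ`
defined on the probability space `(Ω, P)`. -/
def lawFrom {X Z Ω : Type*} [MeasurableSpace X] [MeasurableSpace Ω]
    (S : X → Z → X) (P : Measure Ω) (ξ : ℕ → Ω → Z) (x : X) (n : ℕ) : Measure X :=
  Measure.map (fun ω => traj S x (fun k => ξ k ω) n) P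

/-- The dual Markov semigroup `P_n^*` acting on measures. -/
def Pstar {X Z Ω : Type*} [MeasurableSpace X] [MeasurableSpace Ω]
    (S : X → Z → X) (P : Measure Ω) (ξ : ℕ → Ω → Z) (n : ℕ) (ν : Measure X) : Measure X :=
  ν.bind fun x => lawFrom S P ξ x n

/-- The dual-Lipschitz distance `‖μ - ν‖_L^*` between measures on a metric space. -/
def dualLipDist {X : Type*} [MetricSpace X] [MeasurableSpace X] (μ ν : Measure X) : ℝ :=
  sSup {r | ∃ (f : X → ℝ) (K : ℝ≥0) (Cf : ℝ), LipschitzWith K f ∧ (∀ x, |f x| ≤ Cf) ∧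
    Cf + (K : ℝ) ≤ 1 ∧ r = |∫ x, f x ∂μ - ∫ x, f x ∂ν|}

/-!
Each `𝒴_n` is compact, being the continuous image of `𝒴_{n-1} × ℰ`. By (AC), for `n` large every
`𝒴_n` lies in an `ε`-neighbourhood of the compact set `𝒴`, so `⋃ 𝒴_n` is totally bounded and its
closure `𝒴_∞` is compact in the complete space `𝒳`. Invariance: `S(·, ζ)` is continuous and maps
`𝒴_n` into `𝒴_{n+1}`, hence maps the closure of the union into itself.
-/

open Metric Set

theorem totallyBounded_of_forall_subset_thickening {α : Type*} [PseudoMetricSpace α] {s : Set α}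
    (h : ∀ ε > 0, ∃ t, TotallyBounded t ∧ s ⊆ thickening ε t) : TotallyBounded s := by
  refine totallyBounded_iff.2 fun ε hε => ?_
  obtain ⟨t, ht, hst⟩ := h (ε / 2) (half_pos hε)
  obtain ⟨F, hF, htF⟩ := totallyBounded_iff.1 ht (ε / 2) (half_pos hε)
  refine ⟨F, hF, fun x hx => ?_⟩
  obtain ⟨y, hy, hxy⟩ := mem_thickening_iff.1 (hst hx)
  obtain ⟨f, hf, hyf⟩ := mem_iUnion₂.1 (htF hy)
  refine mem_iUnion₂.2 ⟨f, hf, ?_⟩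
  calc dist x f ≤ dist x y + dist y f := dist_triangle x y f
    _ < ε / 2 + ε / 2 := add_lt_add hxy hyf
    _ = ε := add_halves ε

theorem totallyBounded_iUnion_of_eventually_subset_thickening {α : Type*} [PseudoMetricSpace α]
    {A : ℕ → Set α} {Y : Set α} (hA : ∀ n, TotallyBounded (A n)) (hY : TotallyBounded Y)
    (h : ∀ ε > 0, ∀ᶠ n in atTop, A n ⊆ thickening ε Y) : TotallyBounded (⋃ n, A n) := by
  refine totallyBounded_of_forall_subset_thickening fun ε hε => ?_
  obtain ⟨N, hN⟩ := eventually_atTop.1 (h ε hε)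
  have hfirst : TotallyBounded (⋃ n ∈ Iio N, A n) :=
    (totallyBounded_biUnion (finite_Iio N)).2 fun n _ => hA n
  refine ⟨_, hfirst.union hY, iUnion_subset fun n => ?_⟩
  rcases lt_or_ge n N with hn | hn
  · exact (subset_biUnion_of_mem (u := A) (mem_Iio.2 hn)).trans
      (subset_union_left.trans (self_subset_thickening hε _))
  · exact (hN n hn).trans (thickening_subset_of_subset ε subset_union_right)

section Attainable

variable {X Z : Type*} (S : X → Z → X) (E : Set Z) (Y : Set X)

theorem traj_congr (x : X) {ζ ζ' : ℕ → Z} :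
    ∀ n : ℕ, (∀ k < n, ζ k = ζ' k) → traj S x ζ n = traj S x ζ' n
  | 0, _ => rfl
  | n + 1, h => by
    rw [traj, traj, traj_congr x n fun k hk => h k (hk.trans n.lt_succ_self), h n n.lt_succ_self]

theorem attain_zero [Nonempty Z] : attain S E Y 0 = Y := by
  ext y
  constructor
  · rintro ⟨x, hx, ζ, -, rfl⟩
    exact hx
  · exact fun hy => ⟨y, hy, fun _ => Classical.arbitrary Z, fun k hk => absurd hk k.not_lt_zero, rfl⟩

theorem attain_succ (n : ℕ) :
    attain S E Y (n + 1) = (fun p : X × Z => S p.1 p.2) '' (attain S E Y n ×ˢ E) := by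
  ext y
  constructor
  · rintro ⟨x, hx, ζ, hζ, rfl⟩
    exact ⟨(traj S x ζ n, ζ n),
      ⟨⟨x, hx, ζ, fun k hk => hζ k (hk.trans n.lt_succ_self), rfl⟩, hζ n n.lt_succ_self⟩, rfl⟩
  · rintro ⟨⟨_, z⟩, ⟨⟨x, hx, ζ, hζ, rfl⟩, hz⟩, rfl⟩
    refine ⟨x, hx, fun k => if k < n then ζ k else z, fun k hk => ?_, ?_⟩
    · dsimp only
      split_ifs with hkn
      exacts [hζ k hkn, hz]
    · rw [traj, if_neg (lt_irrefl n), traj_congr S x n fun k hk => (if_pos hk).symm]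

theorem isCompact_attain [TopologicalSpace X] [TopologicalSpace Z]
    (hS : Continuous fun p : X × Z => S p.1 p.2) (hE : IsCompact E) (hY : IsCompact Y) :
    ∀ n, IsCompact (attain S E Y n)
  | 0 => by
    cases isEmpty_or_nonempty Z
    · simp [attain]
    · rwa [attain_zero]
  | n + 1 => by
    rw [attain_succ]
    exact ((isCompact_attain hS hE hY n).prod hE).image hS

theorem mapsTo_attainInf [TopologicalSpace X] {z : Z} (hz : z ∈ E)
    (hS : Continuous fun x => S x z) : MapsTo (S · z) (attainInf S E Y) (attainInf S E Y) := by
  refine MapsTo.closure (fun x hx => ?_) hS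
  obtain ⟨n, hn⟩ := mem_iUnion.1 hx
  exact mem_iUnion.2 ⟨n + 1, attain_succ S E Y n ▸ mem_image_of_mem _ (mk_mem_prod hn hz)⟩

theorem attain_subset_thickening [PseudoMetricSpace X] {n : ℕ} (hn : 1 ≤ n) {δ ε : ℝ}
    (hδ : ∀ x ∈ Y, ∀ ζ : ℕ → Z, (∀ k, ζ k ∈ E) → infDist (traj S x ζ n) Y ≤ δ) (hδε : δ < ε) :
    attain S E Y n ⊆ thickening ε Y := by
  rintro _ ⟨x, hx, ζ, hζ, rfl⟩
  -- only `ζ 0, …, ζ (n-1)` lie in `E`; continuing with `ζ 0` needs `1 ≤ n`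
  set ζ' : ℕ → Z := fun k => if k < n then ζ k else ζ 0
  have hζ' : ∀ k, ζ' k ∈ E := fun k => by
    by_cases hk : k < n
    · simpa [ζ', hk] using hζ k hk
    · simpa [ζ', hk] using hζ 0 hn
  rw [mem_thickening_iff_infDist_lt ⟨x, hx⟩, traj_congr S x n fun k hk => (if_pos hk).symm]
  exact (hδ x hx ζ' hζ').trans_lt hδε

end Attainable

theorem attainInf_compact_invariant_general
    {X Z : Type*}
    [MetricSpace X] [CompleteSpace X]
    [MetricSpace Z]
    [MeasurableSpace Z]
    (S : X → Z → X)
    (hScont : Continuous fun p : X × Z => S p.1 p.2)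
    (ℓ : Measure Z)
    (hEcpt : IsCompact (msupport ℓ))
    -- (AC) asymptotic compactness
    (Y : Set X) (hYcpt : IsCompact Y) (κ : ℝ) (hκ : 0 < κ)
    (V : X → ℝ)
    (hVbdd : ∀ B : Set X, Bornology.IsBounded B → ∃ M : ℝ, ∀ x ∈ B, V x ≤ M)
    (hAC : ∀ (x : X) (ζ : ℕ → Z), (∀ k, ζ k ∈ msupport ℓ) → ∀ n : ℕ, 1 ≤ n →
      Metric.infDist (traj S x ζ n) Y ≤ V x * Real.exp (-(κ * n))) :
    IsCompact (attainInf S (msupport ℓ) Y) ∧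
      ∀ x ∈ attainInf S (msupport ℓ) Y, ∀ ζ ∈ msupport ℓ,
        S x ζ ∈ attainInf S (msupport ℓ) Y := by
  refine ⟨?_, fun x hx z hz => mapsTo_attainInf S _ Y hz (by fun_prop) hx⟩
  obtain ⟨M, hM⟩ := hVbdd Y hYcpt.isBounded
  have hrate : Tendsto (fun n : ℕ => M * Real.exp (-(κ * n))) atTop (𝓝 0) := by
    simpa using (Real.tendsto_exp_neg_atTop_nhds_zero.comp
      (tendsto_natCast_atTop_atTop.const_mul_atTop hκ)).const_mul M
  have hnear : ∀ ε > 0, ∀ᶠ n in atTop, attain S (msupport ℓ) Y n ⊆ thickening ε Y :=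
    fun ε hε => by
      filter_upwards [hrate.eventually (gt_mem_nhds hε), eventually_ge_atTop 1] with n hn h1
      refine attain_subset_thickening S _ Y h1 (fun x hx ζ hζ => ?_) hn
      exact (hAC x ζ hζ n h1).trans (by gcongr; exact hM x hx)
  exact (totallyBounded_iUnion_of_eventually_subset_thickening
    (fun n => (isCompact_attain S _ Y hScont hEcpt hYcpt n).totallyBounded)
    hYcpt.totallyBounded hnear).closure.isCompact_of_isClosed isClosed_closure

/-- Under hypothesis (AC) and compactness of the support `ℰ` of `ℓ`,
the attainable set `𝒴_∞` is compact and invariant: `S(𝒴_∞ × ℰ) ⊆ 𝒴_∞`. -/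
theorem attainInf_compact_invariant
    {X Z : Type*}
    [MetricSpace X] [CompleteSpace X] [TopologicalSpace.SeparableSpace X]
    [MeasurableSpace X] [BorelSpace X]
    [MetricSpace Z] [CompleteSpace Z] [TopologicalSpace.SeparableSpace Z]
    [MeasurableSpace Z] [BorelSpace Z]
    (S : X → Z → X)
    (hScont : Continuous fun p : X × Z => S p.1 p.2)
    (hSlip : ∀ B : Set (X × Z), Bornology.IsBounded B →
      ∃ K : ℝ≥0, LipschitzOnWith K (fun p : X × Z => S p.1 p.2) B)
    (ℓ : Measure Z) [IsProbabilityMeasure ℓ]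
    (hEcpt : IsCompact (msupport ℓ))
    -- (AC) asymptotic compactness
    (Y : Set X) (hYcpt : IsCompact Y) (κ : ℝ) (hκ : 0 < κ)
    (V : X → ℝ) (hVmeas : Measurable V) (hVnonneg : ∀ x, 0 ≤ V x)
    (hVbdd : ∀ B : Set X, Bornology.IsBounded B → ∃ M : ℝ, ∀ x ∈ B, V x ≤ M)
    (hAC : ∀ (x : X) (ζ : ℕ → Z), (∀ k, ζ k ∈ msupport ℓ) → ∀ n : ℕ, 1 ≤ n →
      Metric.infDist (traj S x ζ n) Y ≤ V x * Real.exp (-(κ * n))) :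
    IsCompact (attainInf S (msupport ℓ) Y) ∧
      ∀ x ∈ attainInf S (msupport ℓ) Y, ∀ ζ ∈ msupport ℓ,
        S x ζ ∈ attainInf S (msupport ℓ) Y :=
  attainInf_compact_invariant_general S hScont ℓ hEcpt Y hYcpt κ hκ V hVbdd hAC
end
end

section
/- Assume that the support ℰ of ℓ is compact in 𝒵 and that hypotheses (AC), (I) and (C) are satisfied, and let μ* be the unique invariant measure of the Markov process (x_n). Then the support of μ* is contained in the attainable set 𝒴_∞; in particular μ* has compact support. -/
open MeasureTheory ProbabilityTheory Filter
open scoped NNReal ENNReal Topology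

noncomputable section

/-- The `msupport` of any measure on a (pseudo)metric space is closed. -/
lemma isClosed_msupport {Z : Type*} [PseudoMetricSpace Z] [MeasurableSpace Z]
    (ℓ : Measure Z) : IsClosed (msupport ℓ) := by
  rw [← isOpen_compl_iff, Metric.isOpen_iff]
  intro x hx
  simp only [msupport, Set.mem_compl_iff, Set.mem_setOf_eq, not_forall] at hx
  obtain ⟨ε, hε, h0⟩ := hx
  refine ⟨ε, hε, fun y hy => ?_⟩
  simp only [msupport, Set.mem_compl_iff, Set.mem_setOf_eq, not_forall]
  refine ⟨ε - dist y x, by simpa [Metric.mem_ball] using hy, fun hpos => ?_⟩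
  have hsub : Metric.ball y (ε - dist y x) ⊆ Metric.ball x ε := by
    intro w hw
    simp only [Metric.mem_ball] at hw ⊢
    calc dist w x ≤ dist w y + dist y x := dist_triangle _ _ _
      _ < (ε - dist y x) + dist y x := by linarith
      _ = ε := by ring
  have : ℓ (Metric.ball y (ε - dist y x)) = 0 :=
    measure_mono_null hsub (by simpa using h0)
  simp [this] at hpos

/-- In a second-countable space, the complement of `msupport` is null. -/
lemma compl_msupport_null {Z : Type*} [PseudoMetricSpace Z] [MeasurableSpace Z]
    [SecondCountableTopology Z] (ℓ : Measure Z) : ℓ (msupport ℓ)ᶜ = 0 := by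
  refine measure_null_of_locally_null _ fun x hx => ?_
  simp only [msupport, Set.mem_compl_iff, Set.mem_setOf_eq, not_forall] at hx
  obtain ⟨ε, hε, h0⟩ := hx
  refine ⟨Metric.ball x ε, mem_nhdsWithin_of_mem_nhds (Metric.ball_mem_nhds _ hε), ?_⟩
  simpa using h0

/-- Under compactness of `ℰ` and hypotheses (AC), (I) and (C), the support of
the unique invariant measure `μ*` is contained in the attainable set `𝒴_∞`; in particular
`μ*` has compact support. -/
theorem support_of_invariant_measure
    {X Z Ω Ω' : Type*}
    [MetricSpace X] [CompleteSpace X] [TopologicalSpace.SeparableSpace X]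
    [MeasurableSpace X] [BorelSpace X]
    [MetricSpace Z] [CompleteSpace Z] [TopologicalSpace.SeparableSpace Z]
    [MeasurableSpace Z] [BorelSpace Z]
    [MeasurableSpace Ω] [MeasurableSpace Ω']
    (S : X → Z → X)
    (hScont : Continuous fun p : X × Z => S p.1 p.2)
    (hSlip : ∀ B : Set (X × Z), Bornology.IsBounded B →
      ∃ K : ℝ≥0, LipschitzOnWith K (fun p : X × Z => S p.1 p.2) B)
    (P : Measure Ω) [IsProbabilityMeasure P]
    (ξ : ℕ → Ω → Z) (hξmeas : ∀ n, Measurable (ξ n))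
    (ℓ : Measure Z) [IsProbabilityMeasure ℓ]
    (hξlaw : ∀ n, Measure.map (ξ n) P = ℓ)
    (hξindep : iIndepFun ξ P)
    (hEcpt : IsCompact (msupport ℓ))
    -- (AC) asymptotic compactness
    (Y : Set X) (hYcpt : IsCompact Y) (κ : ℝ) (hκ : 0 < κ)
    (V : X → ℝ) (hVmeas : Measurable V) (hVnonneg : ∀ x, 0 ≤ V x)
    (hVbdd : ∀ B : Set X, Bornology.IsBounded B → ∃ M : ℝ, ∀ x ∈ B, V x ≤ M)
    (hAC : ∀ (x : X) (ζ : ℕ → Z), (∀ k, ζ k ∈ msupport ℓ) → ∀ n : ℕ, 1 ≤ n →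
      Metric.infDist (traj S x ζ n) Y ≤ V x * Real.exp (-(κ * n)))
    -- (I) irreducibility on the compact set
    (z : X) (hz : z ∈ Y)
    (hIrr : ∀ ε : ℝ, 0 < ε → ∃ m : ℕ, 1 ≤ m ∧
      0 < ⨅ x ∈ attainInf S (msupport ℓ) Y, lawFrom S P ξ x m (Metric.ball z ε))
    -- (C) coupling condition on the compact set
    (r : ℝ) (hr0 : 0 ≤ r) (hr1 : r < 1)
    (g : ℝ → ℝ) (hgcont : ContinuousOn g (Set.Ici 0)) (hgmono : MonotoneOn g (Set.Ici 0))
    (hgnonneg : ∀ s : ℝ, 0 ≤ s → 0 ≤ g s) (hg0 : g 0 = 0)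
    (hgdecay : ∃ c : ℝ, 0 < c ∧ ∀ᶠ n : ℕ in atTop, g (r ^ n) ≤ Real.exp (-(c * n)))
    (P' : Measure Ω') [IsProbabilityMeasure P']
    (R R' : X × X × Ω' → X) (hR : Measurable R) (hR' : Measurable R')
    (hmarg : ∀ x ∈ attainInf S (msupport ℓ) Y, ∀ x' ∈ attainInf S (msupport ℓ) Y,
      Measure.map (fun ω => R (x, x', ω)) P' = lawFrom S P ξ x 1 ∧
      Measure.map (fun ω => R' (x, x', ω)) P' = lawFrom S P ξ x' 1)
    (hcoupling : ∀ x ∈ attainInf S (msupport ℓ) Y, ∀ x' ∈ attainInf S (msupport ℓ) Y,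
      P' {ω | r * dist x x' < dist (R (x, x', ω)) (R' (x, x', ω))}
        ≤ ENNReal.ofReal (g (dist x x')))
    -- `μ*` is the unique invariant measure
    (μstar : Measure X) [IsProbabilityMeasure μstar]
    (hinv : ∀ n : ℕ, Pstar S P ξ n μstar = μstar)
    (huniq : ∀ μ : Measure X, IsProbabilityMeasure μ →
      (∀ n : ℕ, Pstar S P ξ n μ = μ) → μ = μstar) :
    msupport μstar ⊆ attainInf S (msupport ℓ) Y ∧ IsCompact (msupport μstar) := by
  have hZ : Nonempty Z := by
    by_contra h
    rw [not_nonempty_iff] at h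
    have h1 : ℓ Set.univ = 1 := measure_univ
    rw [Set.univ_eq_empty_iff.mpr h, measure_empty] at h1
    exact zero_ne_one h1
  haveI : SecondCountableTopology Z := UniformSpace.secondCountable_of_separable Z
  have hEclosed : IsClosed (msupport ℓ) := isClosed_msupport ℓ
  have hEnull : ℓ (msupport ℓ)ᶜ = 0 := compl_msupport_null ℓ
  -- joint measurability of the trajectory map
  have hF : ∀ n : ℕ, Measurable (fun p : X × Ω => traj S p.1 (fun k => ξ k p.2) n) := by
    intro n
    induction n with
    | zero => exact measurable_fst
    | succ n ih =>
      exact hScont.measurable.comp (ih.prodMk ((hξmeas n).comp measurable_snd))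
  have htrajmeas : ∀ (x : X) (n : ℕ), Measurable fun ω => traj S x (fun k => ξ k ω) n :=
    fun x n => (hF n).comp measurable_prodMk_left
  -- the good event: all noises in the support of ℓ
  set G : Set Ω := ⋂ k, (ξ k) ⁻¹' (msupport ℓ) with hGdef
  have hGc : P Gᶜ = 0 := by
    rw [hGdef, Set.compl_iInter]
    refine measure_iUnion_null fun k => ?_
    have : P ((ξ k ⁻¹' msupport ℓ)ᶜ) = ℓ ((msupport ℓ)ᶜ) := by
      rw [← Set.preimage_compl,
        ← Measure.map_apply (hξmeas k) hEclosed.measurableSet.compl, hξlaw k]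
    rw [this, hEnull]
  -- measurability of the law kernel
  have hlawmeas : ∀ n : ℕ, Measurable fun x => lawFrom S P ξ x n := by
    intro n
    apply Measure.measurable_of_measurable_coe
    intro s hs
    have heq : ∀ x, lawFrom S P ξ x n s
        = P (Prod.mk x ⁻¹' ((fun p : X × Ω => traj S p.1 (fun k => ξ k p.2) n) ⁻¹' s)) := by
      intro x
      rw [lawFrom, Measure.map_apply (htrajmeas x n) hs]
      rfl
    simp_rw [heq]
    exact measurable_measure_prodMk_left ((hF n) hs)
  -- key estimate: μ* gives no mass far from Y
  have key : ∀ δ : ℝ, 0 < δ → μstar {y | δ < Metric.infDist y Y} = 0 := by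
    intro δ hδ
    set A : Set X := {y | δ < Metric.infDist y Y} with hAdef
    have hAmeas : MeasurableSet A :=
      (isOpen_lt continuous_const (Metric.continuous_infDist_pt Y)).measurableSet
    set B : ℕ → Set X := fun n => {x | δ < V x * Real.exp (-(κ * n))} with hBdef
    have hBmeas : ∀ n, MeasurableSet (B n) :=
      fun n => measurableSet_lt measurable_const (hVmeas.mul_const _)
    -- if x is not in B n (n ≥ 1), then the n-step law gives no mass to A
    have hlaw0 : ∀ n : ℕ, 1 ≤ n → ∀ x : X, x ∉ B n → lawFrom S P ξ x n A = 0 := by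
      intro n hn x hx
      rw [lawFrom, Measure.map_apply (htrajmeas x n) hAmeas]
      refine measure_mono_null (fun ω hω => ?_) hGc
      intro hωG
      have hζ : ∀ k, ξ k ω ∈ msupport ℓ := fun k => Set.mem_iInter.mp hωG k
      have hAC' := hAC x (fun k => ξ k ω) hζ n hn
      simp only [hBdef, Set.mem_setOf_eq, not_lt] at hx
      simp only [Set.mem_preimage, hAdef, Set.mem_setOf_eq] at hω
      exact absurd (hAC'.trans hx) (not_le.mpr hω)
    -- invariance gives the bound μ* A ≤ μ* (B n)
    have hbound : ∀ n : ℕ, 1 ≤ n → μstar A ≤ μstar (B n) := by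
      intro n hn
      have hinv' : μstar A = ∫⁻ x, lawFrom S P ξ x n A ∂μstar := by
        conv_lhs => rw [← hinv n]
        rw [Pstar, Measure.bind_apply hAmeas (hlawmeas n).aemeasurable]
      rw [hinv', ← lintegral_indicator_one (hBmeas n)]
      refine lintegral_mono fun x => ?_
      by_cases hx : x ∈ B n
      · rw [Set.indicator_of_mem hx]
        calc lawFrom S P ξ x n A
            = P ((fun ω => traj S x (fun k => ξ k ω) n) ⁻¹' A) := by
              rw [lawFrom, Measure.map_apply (htrajmeas x n) hAmeas]
          _ ≤ 1 := prob_le_one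
      · rw [Set.indicator_of_notMem hx, hlaw0 n hn x hx]
    -- the sets B n shrink to ∅
    have hBanti : Antitone B := by
      intro n m hnm x hx
      simp only [hBdef, Set.mem_setOf_eq] at hx ⊢
      refine lt_of_lt_of_le hx ?_
      exact mul_le_mul_of_nonneg_left
        (Real.exp_le_exp.mpr (by
          have : (n : ℝ) ≤ (m : ℝ) := Nat.cast_le.mpr hnm
          nlinarith [hκ.le])) (hVnonneg x)
    have hBempty : (⋂ n, B n) = ∅ := by
      rw [Set.eq_empty_iff_forall_notMem]
      intro x hx
      have hxall : ∀ n : ℕ, δ < V x * Real.exp (-(κ * n)) :=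
        fun n => Set.mem_iInter.mp hx n
      have hto : Tendsto (fun n : ℕ => V x * Real.exp (-(κ * n))) atTop (𝓝 (V x * 0)) := by
        refine Tendsto.const_mul _ ?_
        have : ∀ n : ℕ, Real.exp (-(κ * n)) = Real.exp (-κ) ^ n := by
          intro n
          rw [← Real.exp_nat_mul]
          ring_nf
        simp_rw [this]
        exact tendsto_pow_atTop_nhds_zero_of_lt_one (Real.exp_pos _).le
          (Real.exp_lt_one_iff.mpr (by linarith))
      rw [mul_zero] at hto
      obtain ⟨n, hn⟩ := (hto.eventually (gt_mem_nhds hδ)).exists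
      exact absurd (hxall n) (not_lt.mpr hn.le)
    have htendsto : Tendsto (fun n => μstar (B n)) atTop (𝓝 0) := by
      have := tendsto_measure_iInter_atTop (μ := μstar)
        (fun n => (hBmeas n).nullMeasurableSet) hBanti ⟨0, measure_ne_top _ _⟩
      rw [hBempty, measure_empty] at this
      exact this
    have : μstar A ≤ 0 :=
      ge_of_tendsto htendsto (eventually_atTop.mpr ⟨1, fun n hn => hbound n hn⟩)
    exact le_antisymm this (zero_le)
  -- hence μ* (Yᶜ) = 0
  have hYnull : μstar Yᶜ = 0 := by
    have hYclosed : IsClosed Y := hYcpt.isClosed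
    have hsub : Yᶜ ⊆ ⋃ m : ℕ, {y | 1 / ((m : ℝ) + 1) < Metric.infDist y Y} := by
      intro y hy
      have hpos : 0 < Metric.infDist y Y :=
        (hYclosed.notMem_iff_infDist_pos ⟨z, hz⟩).mp hy
      obtain ⟨m, hm⟩ := exists_nat_one_div_lt hpos
      exact Set.mem_iUnion.mpr ⟨m, hm⟩
    refine measure_mono_null hsub (measure_iUnion_null fun m => ?_)
    exact key _ (by positivity)
  -- support of μ* is contained in Y
  have hsubY : msupport μstar ⊆ Y := by
    intro x hx
    by_contra hxY
    obtain ⟨ε, hε, hsub⟩ := Metric.isOpen_iff.mp hYcpt.isClosed.isOpen_compl x hxY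
    have h1 : 0 < μstar (Metric.ball x ε) := hx ε hε
    have h2 : μstar (Metric.ball x ε) = 0 := measure_mono_null hsub hYnull
    simp [h2] at h1
  have hYsub : Y ⊆ attainInf S (msupport ℓ) Y := by
    intro y hy
    apply subset_closure
    refine Set.mem_iUnion.mpr ⟨0, y, hy, fun _ => Classical.arbitrary Z, ?_, rfl⟩
    intro k hk
    exact absurd hk (Nat.not_lt_zero k)
  exact ⟨hsubY.trans hYsub,
    hYcpt.of_isClosed_subset (isClosed_msupport μstar) hsubY⟩
end
end

section
/- Let 𝒳 be a Polish space with metric d and let 𝒴 ⊆ 𝒳 be a nonempty compact subset. Then there exists a Borel measurable map 𝖯 : 𝒳 → 𝒴 such that d(x, 𝖯x) ≤ 2 dist(x, 𝒴) for every x ∈ 𝒳; in particular 𝖯x = x for x ∈ 𝒴. -/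
/-!
Enumerate a dense sequence `F` of `Y`. For `x ∉ Y` we have `0 < dist(x, Y) < c · dist(x, Y)`, so
some `F n` lies within `c · dist(x, Y)` of `x`; taking the least such `n` is a Borel function of
`x`, since each condition `dist(x, F n) ≤ c · dist(x, Y)` cuts out a closed set. On `Y` itself
we project by the identity.
-/

open MeasureTheory Metric Set TopologicalSpace

theorem TopologicalSpace.IsSeparable.exists_seq_dense {X : Type*} [TopologicalSpace X]
    [PseudoMetrizableSpace X] {Y : Set X} (hY : IsSeparable Y) (hne : Y.Nonempty) :
    ∃ F : ℕ → X, range F ⊆ Y ∧ Y ⊆ closure (range F) := by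
  obtain ⟨t, htY, htc, hYt⟩ := hY.exists_countable_dense_subset
  have htne : t.Nonempty := closure_nonempty_iff.mp (hne.mono hYt)
  obtain ⟨F, rfl⟩ := htc.exists_eq_range htne
  exact ⟨F, htY, hYt⟩

section

variable {X : Type*} [MetricSpace X] {Y : Set X}

theorem Metric.exists_dist_lt_of_infDist_lt {F : ℕ → X} (hF : Y ⊆ closure (range F))
    (hne : Y.Nonempty) {x : X} {r : ℝ} (h : infDist x Y < r) : ∃ n, dist x (F n) < r := by
  have hle : infDist x (range F) ≤ infDist x Y := by
    rw [← infDist_closure]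
    exact infDist_le_infDist_of_subset hF hne
  simpa using (infDist_lt_iff (range_nonempty F)).mp (hle.trans_lt h)

theorem exists_measurable_approximate_projection_of_isSeparable [MeasurableSpace X]
    [OpensMeasurableSpace X] (hYc : IsClosed Y) (hYs : IsSeparable Y) (hne : Y.Nonempty)
    {c : ℝ} (hc : 1 < c) :
    ∃ P : X → X, Measurable P ∧ (∀ x, P x ∈ Y) ∧
      (∀ x, dist x (P x) ≤ c * infDist x Y) ∧ (∀ x ∈ Y, P x = x) := by
  classical
  obtain ⟨F, hFY, hYF⟩ := hYs.exists_seq_dense hne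
  let good : X → ℕ → Prop := fun x n => x ∈ Y ∨ dist x (F n) ≤ c * infDist x Y
  have good_exists : ∀ x, ∃ n, good x n := by
    intro x
    by_cases hx : x ∈ Y
    · exact ⟨0, .inl hx⟩
    · have hpos : 0 < infDist x Y := (hYc.notMem_iff_infDist_pos hne).mp hx
      obtain ⟨n, hn⟩ := exists_dist_lt_of_infDist_lt hYF hne (lt_mul_left hpos hc)
      exact ⟨n, .inr hn.le⟩
  have good_measurable : ∀ n, MeasurableSet {x | good x n} := fun n =>
    hYc.measurableSet.union <| measurableSet_le (by fun_prop)
      (measurable_const.mul (continuous_infDist_pt Y).measurable)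
  let P : X → X := fun x => if x ∈ Y then x else F (Nat.find (good_exists x))
  refine ⟨P, ?_, fun x => ?_, fun x => ?_, fun x hx => if_pos hx⟩
  · exact measurable_id.ite hYc.measurableSet
      (measurable_from_top.comp (measurable_find good_exists good_measurable))
  · by_cases hx : x ∈ Y
    · simp [P, hx]
    · simpa [P, hx] using hFY (mem_range_self _)
  · by_cases hx : x ∈ Y
    · simp [P, hx, infDist_zero_of_mem hx]
    · simpa [P, hx, good] using Nat.find_spec (good_exists x)

end

theorem exists_measurable_approximate_projection_general
    {X : Type*} [MetricSpace X]
    [MeasurableSpace X] [BorelSpace X]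
    (Y : Set X) (hYne : Y.Nonempty) (hYcpt : IsCompact Y) :
    ∃ P : X → X, Measurable P ∧ (∀ x, P x ∈ Y) ∧
      (∀ x, dist x (P x) ≤ 2 * Metric.infDist x Y) ∧
      (∀ x ∈ Y, P x = x) :=
  exists_measurable_approximate_projection_of_isSeparable hYcpt.isClosed hYcpt.isSeparable hYne
    one_lt_two

/-- For a nonempty compact subset `Y` of a Polish space `X`, there is a Borel
measurable map `𝖯 : X → Y` with `d(x, 𝖯x) ≤ 2 dist(x, Y)` for every `x`; in particular
`𝖯x = x` for `x ∈ Y`. -/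
theorem exists_measurable_approximate_projection
    {X : Type*} [MetricSpace X] [CompleteSpace X] [TopologicalSpace.SeparableSpace X]
    [MeasurableSpace X] [BorelSpace X]
    (Y : Set X) (hYne : Y.Nonempty) (hYcpt : IsCompact Y) :
    ∃ P : X → X, Measurable P ∧ (∀ x, P x ∈ Y) ∧
      (∀ x, dist x (P x) ≤ 2 * Metric.infDist x Y) ∧
      (∀ x ∈ Y, P x = x) :=
  exists_measurable_approximate_projection_general Y hYne hYcpt
end

section
/- Let 𝛆 = (ε₁, ε₂) with ε₁ ≥ ε₂ ≥ 0, let (𝒵, ℬ, ℓ) be a probability space, and let U₁, U₂ : 𝒵 → 𝒳 be measurable maps with laws μ₁ = (U₁)_*ℓ and μ₂ = (U₂)_*ℓ. Assume there exists a measurable map Ψ : 𝒵 → 𝒵 such that ‖U₁(ζ) − U₂(Ψ(ζ))‖ ≤ ε₂ for ℓ-almost every ζ ∈ 𝒵. Then ‖μ₁ − μ₂‖_𝛆 ≤ 2 ‖ℓ − Ψ_*ℓ‖_TV. -/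
open MeasureTheory ProbabilityTheory
open scoped NNReal ENNReal

noncomputable section

/-- The function `φ_𝛆` associated with the pair `𝛆 = (e₁, e₂)`, `0 ≤ e₂ ≤ e₁`: it equals `0` on
`[0, e₂]`, equals `(s − e₂)/(e₁ − e₂)` on `(e₂, e₁]` and equals `1` on `(e₁, ∞)` (for `e₁ = e₂`
it is the indicator of `(e₁, ∞)`). -/
def phiE (e₁ e₂ s : ℝ) : ℝ :=
  if s ≤ e₂ then 0 else if s ≤ e₁ then (s - e₂) / (e₁ - e₂) else 1

/-- The distance `‖μ − ν‖_𝛆`: the infimum of `𝔼 ρ_𝛆(ξ, η)` over couplings `(ξ, η)` of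
`(μ, ν)`, where `ρ_𝛆(x, x') = φ_𝛆(‖x − x'‖)`; couplings are encoded by their joint laws. -/
def couplingDist {X : Type*} [NormedAddCommGroup X] [MeasurableSpace X]
    (e₁ e₂ : ℝ) (μ ν : Measure X) : ℝ :=
  sInf {r | ∃ π : Measure (X × X), IsProbabilityMeasure π ∧
    π.map Prod.fst = μ ∧ π.map Prod.snd = ν ∧
    r = ∫ p, phiE e₁ e₂ ‖p.1 - p.2‖ ∂π}

/-- The total variation distance between two measures. -/
def tvDist {α : Type*} [MeasurableSpace α] (μ ν : Measure α) : ℝ :=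
  sSup {r | ∃ A : Set α, MeasurableSet A ∧ r = |(μ A).toReal - (ν A).toReal|}

lemma measurable_phiE (e₁ e₂ : ℝ) : Measurable (phiE e₁ e₂) := by
  unfold phiE
  exact Measurable.ite (measurableSet_le measurable_id measurable_const) measurable_const <|
    Measurable.ite (measurableSet_le measurable_id measurable_const)
      ((measurable_id.sub_const _).div_const _) measurable_const

lemma phiE_nonneg (e₁ e₂ s : ℝ) (h : e₂ ≤ e₁) : 0 ≤ phiE e₁ e₂ s := by
  unfold phiE
  split_ifs with h1 h3
  · exact le_refl _
  · have hs : e₂ < s := not_le.1 h1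
    rcases eq_or_lt_of_le h with heq | hlt
    · exact absurd (heq ▸ h3) h1
    · apply div_nonneg <;> linarith
  · norm_num

lemma phiE_le_one (e₁ e₂ s : ℝ) (h : e₂ ≤ e₁) : phiE e₁ e₂ s ≤ 1 := by
  unfold phiE
  split_ifs with h1 h3
  · norm_num
  · rcases eq_or_lt_of_le h with heq | hlt
    · exact absurd (heq ▸ h3) h1
    · rw [div_le_one (by linarith)]
      have := not_le.1 h1
      linarith
  · exact le_refl _

lemma phiE_eq_zero (e₁ e₂ s : ℝ) (h : s ≤ e₂) : phiE e₁ e₂ s = 0 := by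
  unfold phiE; rw [if_pos h]

/-- If `U₁, U₂ : 𝒵 → X` have laws `μ₁, μ₂` and there is a measurable
`Ψ : 𝒵 → 𝒵` with `‖U₁(ζ) − U₂(Ψ(ζ))‖ ≤ ε₂` for `ℓ`-a.e. `ζ`, then
`‖μ₁ − μ₂‖_𝛆 ≤ 2 ‖ℓ − Ψ_*ℓ‖_TV`. -/
theorem couplingDist_le_two_tvDist
    {X : Type*} [NormedAddCommGroup X] [NormedSpace ℝ X] [CompleteSpace X]
    [TopologicalSpace.SeparableSpace X] [MeasurableSpace X] [BorelSpace X]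
    {Z : Type*} [MeasurableSpace Z] (ℓ : Measure Z) [IsProbabilityMeasure ℓ]
    (ε₁ ε₂ : ℝ) (hε₂ : 0 ≤ ε₂) (hε : ε₂ ≤ ε₁)
    (U₁ U₂ : Z → X) (hU₁ : Measurable U₁) (hU₂ : Measurable U₂)
    (Ψ : Z → Z) (hΨ : Measurable Ψ)
    (hclose : ∀ᵐ ζ ∂ℓ, ‖U₁ ζ - U₂ (Ψ ζ)‖ ≤ ε₂) :
    couplingDist ε₁ ε₂ (ℓ.map U₁) (ℓ.map U₂) ≤ 2 * tvDist ℓ (ℓ.map Ψ) := by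
  classical
  set ν : Measure Z := ℓ.map Ψ with hν
  haveI hνp : IsProbabilityMeasure ν := Measure.isProbabilityMeasure_map hΨ.aemeasurable
  set μ₁ : Measure X := ℓ.map U₁ with hμ₁
  set μ₂ : Measure X := ℓ.map U₂ with hμ₂
  haveI hμ₁p : IsProbabilityMeasure μ₁ := Measure.isProbabilityMeasure_map hU₁.aemeasurable
  haveI hμ₂p : IsProbabilityMeasure μ₂ := Measure.isProbabilityMeasure_map hU₂.aemeasurable
  set σm : Measure X := ℓ.map (fun z => U₂ (Ψ z)) with hσ
  haveI hσp : IsProbabilityMeasure σm :=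
    Measure.isProbabilityMeasure_map ((hU₂.comp hΨ).aemeasurable)
  -- the joint law π₀ of (U₂ ∘ Ψ, U₁)
  set G : Z → X × X := fun z => (U₂ (Ψ z), U₁ z) with hG
  have hGm : Measurable G := (hU₂.comp hΨ).prodMk hU₁
  set π₀ : Measure (X × X) := ℓ.map G with hπ₀
  haveI hπ₀p : IsProbabilityMeasure π₀ := Measure.isProbabilityMeasure_map hGm.aemeasurable
  have hfst0 : π₀.fst = σm := by
    rw [Measure.fst, hπ₀, Measure.map_map measurable_fst hGm]; rfl
  set κ : Kernel X X := π₀.condKernel with hκ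
  haveI : IsMarkovKernel κ := by rw [hκ]; infer_instance
  have hdis : σm ⊗ₘ κ = π₀ := by
    rw [← hfst0, hκ]; exact π₀.disintegrate π₀.condKernel
  -- Hahn decomposition of (μ₂, σm)
  obtain ⟨s, hs, hsge, hsle⟩ := hahn_decomposition (μ := μ₂) (ν := σm)
  set χ : Measure X := σm.restrict s + μ₂.restrict sᶜ with hχ
  have hχμ₂ : χ ≤ μ₂ := by
    rw [Measure.le_iff]
    intro t ht
    have h1 : σm (t ∩ s) ≤ μ₂ (t ∩ s) := hsge _ (ht.inter hs) Set.inter_subset_right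
    calc χ t = σm (t ∩ s) + μ₂ (t ∩ sᶜ) := by
          rw [hχ, Measure.add_apply, Measure.restrict_apply ht, Measure.restrict_apply ht]
      _ ≤ μ₂ (t ∩ s) + μ₂ (t ∩ sᶜ) := add_le_add_left h1 _
      _ = μ₂ t := by rw [← Set.diff_eq, measure_inter_add_diff t hs]
  have hχσ : χ ≤ σm := by
    rw [Measure.le_iff]
    intro t ht
    have h1 : μ₂ (t ∩ sᶜ) ≤ σm (t ∩ sᶜ) := hsle _ (ht.inter hs.compl) Set.inter_subset_right
    calc χ t = σm (t ∩ s) + μ₂ (t ∩ sᶜ) := by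
          rw [hχ, Measure.add_apply, Measure.restrict_apply ht, Measure.restrict_apply ht]
      _ ≤ σm (t ∩ s) + σm (t ∩ sᶜ) := add_le_add_right h1 _
      _ = σm t := by rw [← Set.diff_eq, measure_inter_add_diff t hs]
  haveI hχfin : IsFiniteMeasure χ := isFiniteMeasure_of_le μ₂ hχμ₂
  set δ₂ : Measure X := μ₂ - χ with hδ₂
  set δσ : Measure X := σm - χ with hδσ
  haveI : IsFiniteMeasure δ₂ := isFiniteMeasure_of_le μ₂ Measure.sub_le
  haveI : IsFiniteMeasure δσ := isFiniteMeasure_of_le σm Measure.sub_le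
  have hadd₂ : δ₂ + χ = μ₂ := Measure.sub_add_cancel_of_le hχμ₂
  have haddσ : δσ + χ = σm := Measure.sub_add_cancel_of_le hχσ
  set m : ℝ≥0∞ := δ₂ Set.univ with hm
  have hχu_le : χ Set.univ ≤ 1 :=
    le_trans (Measure.le_iff'.mp hχμ₂ Set.univ) (le_of_eq measure_univ)
  have hm2 : m = 1 - χ Set.univ := by
    rw [hm, hδ₂, Measure.sub_apply MeasurableSet.univ hχμ₂, measure_univ]
  have hmσ : δσ Set.univ = m := by
    rw [hδσ, Measure.sub_apply MeasurableSet.univ hχσ, measure_univ, hm2]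
  have hm_le : m ≤ 1 := by rw [hm2]; exact tsub_le_self
  have hm_ne_top : m ≠ ∞ := (hm_le.trans_lt (by norm_num)).ne
  -- the correction measure
  set β : Measure X := δσ.bind (κ : X → Measure X) with hβ
  have hβ_apply : ∀ t : Set X, MeasurableSet t → β t = ∫⁻ x, κ x t ∂δσ := fun t ht =>
    Measure.bind_apply ht κ.measurable.aemeasurable
  have hβu : β Set.univ = m := by
    rw [hβ_apply _ MeasurableSet.univ]
    simp [measure_univ, hmσ]
  haveI : IsFiniteMeasure β := ⟨by rw [hβu]; exact hm_le.trans_lt (by norm_num)⟩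
  set part2 : Measure (X × X) := δ₂.prod β with hpart2
  set π' : Measure (X × X) := (χ ⊗ₘ κ) + (m⁻¹ • part2) with hπ'
  -- degenerate case helpers
  have hdegen : m = 0 → δ₂ = 0 ∧ δσ = 0 := fun h =>
    ⟨Measure.measure_univ_eq_zero.mp (hm ▸ h), Measure.measure_univ_eq_zero.mp (by rw [hmσ]; exact h)⟩
  -- part2 applied to rectangles
  have hcancel : ∀ a : ℝ≥0∞, m⁻¹ * (m * a) = (if m = 0 then 0 else a) := by
    intro a
    split_ifs with h0
    · simp [h0]
    · rw [← mul_assoc, ENNReal.inv_mul_cancel h0 hm_ne_top, one_mul]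
  -- first marginal
  have hfst' : π'.map Prod.fst = μ₂ := by
    ext t ht
    rw [Measure.map_apply measurable_fst ht, hπ', Measure.add_apply]
    have h1 : (χ ⊗ₘ κ) (Prod.fst ⁻¹' t) = χ t := by
      rw [← Measure.fst_apply ht, Measure.fst_compProd]
    have hrect : Prod.fst ⁻¹' t = t ×ˢ (Set.univ : Set X) := by
      ext p; simp
    have h2 : (m⁻¹ • part2) (Prod.fst ⁻¹' t) = δ₂ t := by
      rw [Measure.smul_apply, smul_eq_mul, hrect, hpart2, Measure.prod_prod, hβu]
      rcases eq_or_ne m 0 with h0 | h0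
      · rw [(hdegen h0).1]; simp
      · rw [mul_comm (δ₂ t) m, ← mul_assoc, ENNReal.inv_mul_cancel h0 hm_ne_top, one_mul]
    rw [h1, h2, ← Measure.add_apply, add_comm χ δ₂, hadd₂]
  -- second marginal
  have hκt : ∀ t : Set X, MeasurableSet t →
      (χ ⊗ₘ κ) (Prod.snd ⁻¹' t) = ∫⁻ x, κ x t ∂χ := by
    intro t ht
    rw [Measure.compProd_apply (measurable_snd ht)]
    rfl
  have hsnd' : π'.map Prod.snd = μ₁ := by
    ext t ht
    rw [Measure.map_apply measurable_snd ht, hπ', Measure.add_apply, hκt t ht]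
    have hrect : Prod.snd ⁻¹' t = (Set.univ : Set X) ×ˢ t := by
      ext p; simp
    have h2 : (m⁻¹ • part2) (Prod.snd ⁻¹' t) = ∫⁻ x, κ x t ∂δσ := by
      rw [Measure.smul_apply, smul_eq_mul, hrect, hpart2, Measure.prod_prod, ← hm, hcancel]
      split_ifs with h0
      · rw [(hdegen h0).2]; simp
      · exact hβ_apply t ht
    have hμ₁t : μ₁ t = ∫⁻ x, κ x t ∂σm := by
      have hmap : π₀.map Prod.snd = μ₁ := by
        rw [hπ₀, Measure.map_map measurable_snd hGm]; rfl
      rw [← hmap, Measure.map_apply measurable_snd ht, ← hdis,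
        Measure.compProd_apply (measurable_snd ht)]
      rfl
    rw [h2, hμ₁t, ← lintegral_add_measure, add_comm χ δσ, haddσ]
  -- π' is a probability measure
  have hp2u : (m⁻¹ • part2) Set.univ = m := by
    have : (Set.univ : Set (X × X)) = (Set.univ : Set X) ×ˢ (Set.univ : Set X) := by
      ext p; simp
    rw [Measure.smul_apply, smul_eq_mul, this, hpart2, Measure.prod_prod, hβu, ← hm, hcancel]
    split_ifs with h0
    · exact h0.symm
    · rfl
  haveI hπ'p : IsProbabilityMeasure π' := by
    constructor
    have hcu : (χ ⊗ₘ κ) Set.univ = χ Set.univ := by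
      conv_lhs => rw [← Set.preimage_univ (f := @Prod.fst X X)]
      rw [← Measure.fst_apply MeasurableSet.univ, Measure.fst_compProd]
    rw [hπ', Measure.add_apply, hcu, hp2u, hm2, add_tsub_cancel_of_le hχu_le]
  -- the final coupling
  set π : Measure (X × X) := π'.map Prod.swap with hπdef
  haveI : IsProbabilityMeasure π := Measure.isProbabilityMeasure_map measurable_swap.aemeasurable
  have hπfst : π.map Prod.fst = μ₁ := by
    rw [hπdef, Measure.map_map measurable_fst measurable_swap]
    exact hsnd'
  have hπsnd : π.map Prod.snd = μ₂ := by
    rw [hπdef, Measure.map_map measurable_snd measurable_swap]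
    exact hfst'
  -- the function F
  set F : X × X → ℝ := fun p => phiE ε₁ ε₂ ‖p.1 - p.2‖ with hF
  have hFm : Measurable F := (measurable_phiE _ _).comp ((measurable_fst.sub measurable_snd).norm)
  have hF0 : ∀ p, 0 ≤ F p := fun p => phiE_nonneg _ _ _ hε
  have hF1 : ∀ p, F p ≤ 1 := fun p => phiE_le_one _ _ _ hε
  have hint : ∀ (μ'' : Measure (X × X)), IsFiniteMeasure μ'' → Integrable F μ'' := by
    intro μ'' hfin
    exact (integrable_const (1:ℝ)).mono' hFm.aestronglyMeasurable
      (ae_of_all _ fun p => by rw [Real.norm_eq_abs, abs_of_nonneg (hF0 p)]; exact hF1 p)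
  haveI hfin2 : IsFiniteMeasure (m⁻¹ • part2) := ⟨by rw [hp2u]; exact hm_le.trans_lt (by norm_num)⟩
  -- value of the integral on the compProd part
  have hkey : ∫ p, F p ∂(χ ⊗ₘ κ) = 0 := by
    have hmeas : Measurable fun p => ENNReal.ofReal (F p) := hFm.ennreal_ofReal
    have h1 : ∫⁻ p, ENNReal.ofReal (F p) ∂(χ ⊗ₘ κ) ≤ ∫⁻ p, ENNReal.ofReal (F p) ∂(σm ⊗ₘ κ) := by
      rw [Measure.lintegral_compProd hmeas, Measure.lintegral_compProd hmeas]
      exact lintegral_mono' hχσ le_rfl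
    have h2 : ∫⁻ p, ENNReal.ofReal (F p) ∂(σm ⊗ₘ κ) = 0 := by
      rw [hdis, hπ₀, lintegral_map hmeas hGm]
      have hae : ∀ᵐ z ∂ℓ, ENNReal.ofReal (F (G z)) = 0 := by
        filter_upwards [hclose] with z hz
        have : ‖U₂ (Ψ z) - U₁ z‖ ≤ ε₂ := by rwa [norm_sub_rev] at hz
        rw [hF, hG]
        simp only []
        rw [phiE_eq_zero _ _ _ this, ENNReal.ofReal_zero]
      rw [lintegral_congr_ae hae, lintegral_zero]
    have h0 : ∫⁻ p, ENNReal.ofReal (F p) ∂(χ ⊗ₘ κ) = 0 := le_antisymm (h1.trans h2.le) zero_le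
    rw [integral_eq_lintegral_of_nonneg_ae (ae_of_all _ hF0) hFm.aestronglyMeasurable, h0]
    simp
  -- bound on the second part
  have hb2 : ∫ p, F p ∂(m⁻¹ • part2) ≤ m.toReal := by
    calc ∫ p, F p ∂(m⁻¹ • part2) ≤ ∫ _p, (1:ℝ) ∂(m⁻¹ • part2) :=
          integral_mono (hint _ hfin2) (integrable_const _) hF1
      _ = ((m⁻¹ • part2) Set.univ).toReal := by rw [integral_const, smul_eq_mul, mul_one]; rfl
      _ = m.toReal := by rw [hp2u]
  -- the integral over π equals the integral over π'
  have hππ' : ∫ p, F p ∂π = ∫ p, F p ∂π' := by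
    rw [hπdef, integral_map measurable_swap.aemeasurable hFm.aestronglyMeasurable]
    congr 1
    funext p
    rw [hF]
    simp only [Prod.fst_swap, Prod.snd_swap]
    rw [norm_sub_rev]
  have hπval : ∫ p, F p ∂π ≤ m.toReal := by
    rw [hππ', hπ', integral_add_measure (hint _ inferInstance) (hint _ hfin2), hkey, zero_add]
    exact hb2
  -- total variation bound
  have hms : m + σm s = μ₂ s := by
    have hχu : χ Set.univ = σm s + μ₂ sᶜ := by
      rw [hχ, Measure.add_apply, Measure.restrict_apply MeasurableSet.univ,
        Measure.restrict_apply MeasurableSet.univ, Set.univ_inter, Set.univ_inter]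
    have h1 : m + χ Set.univ = 1 := by
      rw [hm2, tsub_add_cancel_of_le hχu_le]
    have h2 : (m + σm s) + μ₂ sᶜ = μ₂ s + μ₂ sᶜ := by
      rw [add_assoc, ← hχu, h1, measure_add_measure_compl hs, measure_univ]
    exact (ENNReal.add_left_inj (measure_ne_top _ _)).mp h2
  have hmtoReal : m.toReal = (μ₂ s).toReal - (σm s).toReal := by
    have := congrArg ENNReal.toReal hms
    rw [ENNReal.toReal_add hm_ne_top (measure_ne_top _ _)] at this
    linarith
  -- the set of tv values is bounded above by 1
  have hbdd : ∀ r ∈ {r | ∃ A : Set Z, MeasurableSet A ∧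
      r = |(ℓ A).toReal - (ν A).toReal|}, r ≤ 1 := by
    rintro r ⟨A, hA, rfl⟩
    have h1 : (ℓ A).toReal ≤ 1 := by
      have := prob_le_one (μ := ℓ) (s := A)
      exact ENNReal.toReal_le_of_le_ofReal one_pos.le (by simpa using this)
    have h2 : (ν A).toReal ≤ 1 := by
      have := prob_le_one (μ := ν) (s := A)
      exact ENNReal.toReal_le_of_le_ofReal one_pos.le (by simpa using this)
    have h3 : 0 ≤ (ℓ A).toReal := ENNReal.toReal_nonneg
    have h4 : 0 ≤ (ν A).toReal := ENNReal.toReal_nonneg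
    rw [abs_le]; constructor <;> linarith
  have htv_nonneg : 0 ≤ tvDist ℓ ν := by
    apply le_csSup ⟨1, hbdd⟩
    exact ⟨∅, MeasurableSet.empty, by simp⟩
  have hmtv : m.toReal ≤ tvDist ℓ ν := by
    have hA : MeasurableSet (U₂ ⁻¹' s) := hU₂ hs
    have hμ₂s : μ₂ s = ℓ (U₂ ⁻¹' s) := by rw [hμ₂, Measure.map_apply hU₂ hs]
    have hσs : σm s = ν (U₂ ⁻¹' s) := by
      rw [hσ, hν, Measure.map_apply (show Measurable (fun z => U₂ (Ψ z)) from hU₂.comp hΨ) hs,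
        Measure.map_apply hΨ hA]
      rfl
    have hmem : |(ℓ (U₂ ⁻¹' s)).toReal - (ν (U₂ ⁻¹' s)).toReal| ∈
        {r | ∃ A : Set Z, MeasurableSet A ∧ r = |(ℓ A).toReal - (ν A).toReal|} :=
      ⟨U₂ ⁻¹' s, hA, rfl⟩
    calc m.toReal = (μ₂ s).toReal - (σm s).toReal := hmtoReal
      _ ≤ |(ℓ (U₂ ⁻¹' s)).toReal - (ν (U₂ ⁻¹' s)).toReal| := by
          rw [← hμ₂s, ← hσs]; exact le_abs_self _
      _ ≤ tvDist ℓ ν := le_csSup ⟨1, hbdd⟩ hmem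
  -- conclude
  have hmem : (∫ p, F p ∂π) ∈ {r | ∃ π'' : Measure (X × X), IsProbabilityMeasure π'' ∧
      π''.map Prod.fst = μ₁ ∧ π''.map Prod.snd = μ₂ ∧
      r = ∫ p, phiE ε₁ ε₂ ‖p.1 - p.2‖ ∂π''} :=
    ⟨π, inferInstance, hπfst, hπsnd, rfl⟩
  have hbddBelow : BddBelow {r | ∃ π'' : Measure (X × X), IsProbabilityMeasure π'' ∧
      π''.map Prod.fst = μ₁ ∧ π''.map Prod.snd = μ₂ ∧
      r = ∫ p, phiE ε₁ ε₂ ‖p.1 - p.2‖ ∂π''} := by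
    refine ⟨0, ?_⟩
    rintro r ⟨π'', _, _, _, rfl⟩
    exact integral_nonneg fun p => phiE_nonneg _ _ _ hε
  calc couplingDist ε₁ ε₂ μ₁ μ₂ ≤ ∫ p, F p ∂π := csInf_le hbddBelow hmem
    _ ≤ m.toReal := hπval
    _ ≤ tvDist ℓ ν := hmtv
    _ ≤ 2 * tvDist ℓ ν := by linarith
end
end

section
/- Let (X, d) be a Polish space, let r ∈ [0,1), δ ∈ (0,1], and let g : [0,∞) → [0,∞) be continuous and increasing with g(0) = 0 and g(δ) < 1. Let Q be a Markov kernel on X × X such that for every z = (x, x') ∈ X × X with d(x, x') ≤ δ one has Q(z, {(y, y') : d(y, y') ≤ r d(x, x')}) ≥ 1 − g(d(x, x')). Fix z = (x, x') with d(x, x') ≤ δ, let ((x_n, x'_n))_{n∈ℕ} be the Markov chain with kernel Q started at z, and define the stopping time σ = inf{n ∈ ℕ : d(x_n, x'_n) > rⁿ δ}. Then ℙ_z(σ = ∞) ≥ ∏_{k∈ℕ} (1 − g(rᵏ d(x, x'))), and ℙ_z(σ = n) ≤ g(r^{n−1}) for every n ∈ ℕ⁺. -/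
open MeasureTheory ProbabilityTheory Filter
open scoped NNReal ENNReal

noncomputable section

/-- The natural filtration of the coordinate process on path space: the σ-algebra generated by
the coordinates `ω 0, …, ω n`. -/
def natFiltration (E : Type*) [m : MeasurableSpace E] (n : ℕ) : MeasurableSpace (ℕ → E) :=
  ⨆ k ∈ Finset.range (n + 1), MeasurableSpace.comap (fun ω : ℕ → E => ω k) m

/-- A measure `Pz` on path space is the law of a homogeneous Markov chain with one-step
transition kernel `Q`: conditionally on the first `n + 1` coordinates, the distribution of the
`(n+1)`-st coordinate is `Q (ω n, ·)`. -/
def IsMarkovChainLaw {E : Type*} [MeasurableSpace E] (Q : Kernel E E)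
    (Pz : Measure (ℕ → E)) : Prop :=
  ∀ (n : ℕ) (C : Set E), MeasurableSet C →
    (fun ω => (Q (ω n) C).toReal) =ᵐ[Pz]
      Pz[(fun ω => Set.indicator {ω' : ℕ → E | ω' (n + 1) ∈ C} (fun _ => (1 : ℝ)) ω) |
        natFiltration E n]

lemma natFiltration_le (E : Type*) [m : MeasurableSpace E] (n : ℕ) :
    natFiltration E n ≤ (inferInstance : MeasurableSpace (ℕ → E)) :=
  iSup₂_le fun k _ => (measurable_pi_apply k).comap_le

lemma measurableSet_natFiltration {E : Type*} [m : MeasurableSpace E] {n k : ℕ} (hk : k ≤ n)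
    {S : Set E} (hS : MeasurableSet S) :
    MeasurableSet[natFiltration E n] ((fun ω : ℕ → E => ω k) ⁻¹' S) := by
  have h : MeasurableSpace.comap (fun ω : ℕ → E => ω k) m ≤ natFiltration E n :=
    le_iSup₂ (f := fun k (_ : k ∈ Finset.range (n + 1)) =>
      MeasurableSpace.comap (fun ω : ℕ → E => ω k) m) k
      (Finset.mem_range.mpr (Nat.lt_succ_of_le hk))
  exact h _ ⟨S, hS, rfl⟩

lemma integrable_kernel_toReal {E : Type*} [MeasurableSpace E] (Q : Kernel E E)
    [IsMarkovKernel Q] (Pz : Measure (ℕ → E)) [IsProbabilityMeasure Pz] (n : ℕ)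
    {C : Set E} (hC : MeasurableSet C) :
    Integrable (fun ω : ℕ → E => (Q (ω n) C).toReal) Pz := by
  have hmeas : Measurable fun ω : ℕ → E => (Q (ω n) C).toReal :=
    ((Q.measurable_coe hC).comp (measurable_pi_apply n)).ennreal_toReal
  refine (integrable_const (1 : ℝ)).mono' hmeas.aestronglyMeasurable (ae_of_all _ fun ω => ?_)
  rw [Real.norm_eq_abs, abs_of_nonneg ENNReal.toReal_nonneg]
  exact (ENNReal.toReal_mono ENNReal.one_ne_top prob_le_one).trans_eq ENNReal.toReal_one

lemma markov_step {E : Type*} [MeasurableSpace E] (Q : Kernel E E) [IsMarkovKernel Q]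
    (Pz : Measure (ℕ → E)) [IsProbabilityMeasure Pz] (hM : IsMarkovChainLaw Q Pz)
    (n : ℕ) {C : Set E} (hC : MeasurableSet C)
    {F : Set (ℕ → E)} (hF : MeasurableSet[natFiltration E n] F) :
    (Pz (F ∩ {ω | ω (n + 1) ∈ C})).toReal = ∫ ω in F, (Q (ω n) C).toReal ∂Pz := by
  have hm := natFiltration_le E n
  have hFm : MeasurableSet F := hm F hF
  have hA : MeasurableSet {ω : ℕ → E | ω (n + 1) ∈ C} := measurable_pi_apply (n + 1) hC
  have hint : Integrable (fun ω : ℕ → E =>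
      Set.indicator {ω' : ℕ → E | ω' (n + 1) ∈ C} (fun _ => (1 : ℝ)) ω) Pz :=
    (integrable_const (1 : ℝ)).indicator hA
  have h1 : ∫ ω in F, (Q (ω n) C).toReal ∂Pz
      = ∫ ω in F, Set.indicator {ω' : ℕ → E | ω' (n + 1) ∈ C} (fun _ => (1 : ℝ)) ω ∂Pz := by
    rw [setIntegral_congr_ae hFm ((hM n C hC).mono fun ω h _ => h)]
    exact setIntegral_condExp hm hint hF
  rw [h1, setIntegral_indicator hA, setIntegral_const]
  simp
  rfl

/-- For a Markov chain `(x_n, x'_n)` started at `z = (x, x')` with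
`d(x, x') ≤ δ`, whose kernel contracts distances by a factor `r` up to probability
`g(d(x, x'))`, the stopping time `σ = inf {n : d(x_n, x'_n) > rⁿ δ}` satisfies
`ℙ_z(σ = ∞) ≥ ∏_{k} (1 − g(rᵏ d(x, x')))` and `ℙ_z(σ = n) ≤ g(r^{n−1})` for `n ≥ 1`. -/
theorem markov_squeezing
    {X : Type*} [MetricSpace X] [TopologicalSpace.SeparableSpace X] [CompleteSpace X]
    [MeasurableSpace X] [BorelSpace X]
    (r δ : ℝ) (hr0 : 0 ≤ r) (hr1 : r < 1) (hδ0 : 0 < δ) (hδ1 : δ ≤ 1)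
    (g : ℝ → ℝ) (hgcont : ContinuousOn g (Set.Ici 0)) (hgmono : MonotoneOn g (Set.Ici 0))
    (hgnonneg : ∀ s : ℝ, 0 ≤ s → 0 ≤ g s) (hg0 : g 0 = 0) (hgδ : g δ < 1)
    (Q : Kernel (X × X) (X × X)) [IsMarkovKernel Q]
    (hQ : ∀ z : X × X, dist z.1 z.2 ≤ δ →
      ENNReal.ofReal (1 - g (dist z.1 z.2)) ≤
        Q z {p : X × X | dist p.1 p.2 ≤ r * dist z.1 z.2})
    (x x' : X) (hd : dist x x' ≤ δ)
    (Pz : Measure (ℕ → X × X)) [IsProbabilityMeasure Pz]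
    (hinit : Pz.map (fun ω => ω 0) = Measure.dirac (x, x'))
    (hMarkov : IsMarkovChainLaw Q Pz) :
    ENNReal.ofReal (∏' k : ℕ, (1 - g (r ^ k * dist x x'))) ≤
        Pz {ω | ∀ n : ℕ, dist (ω n).1 (ω n).2 ≤ r ^ n * δ} ∧
      ∀ n : ℕ, 1 ≤ n →
        Pz {ω | r ^ n * δ < dist (ω n).1 (ω n).2 ∧
              ∀ k < n, dist (ω k).1 (ω k).2 ≤ r ^ k * δ}
          ≤ ENNReal.ofReal (g (r ^ (n - 1))) := by
  haveI : SecondCountableTopology X := UniformSpace.secondCountable_of_separable X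
  have hmeas_dist : ∀ c : ℝ, MeasurableSet {p : X × X | dist p.1 p.2 ≤ c} := fun c =>
    measurableSet_le (continuous_fst.dist continuous_snd).measurable measurable_const
  have hrp : ∀ k : ℕ, (0 : ℝ) ≤ r ^ k := fun k => pow_nonneg hr0 k
  have hrle1 : ∀ k : ℕ, r ^ k ≤ 1 := fun k => pow_le_one₀ hr0 hr1.le
  set d0 := dist x x' with hd0def
  have hd0nn : 0 ≤ d0 := dist_nonneg
  have hkd0δ : ∀ k : ℕ, r ^ k * d0 ≤ δ := fun k =>
    ((mul_le_mul_of_nonneg_right (hrle1 k) hd0nn).trans_eq (one_mul d0)).trans hd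
  set a : ℕ → ℝ := fun k => 1 - g (r ^ k * d0) with hadef
  have hga : ∀ k, g (r ^ k * d0) < 1 := fun k =>
    lt_of_le_of_lt (hgmono (mul_nonneg (hrp k) hd0nn) hδ0.le (hkd0δ k)) hgδ
  have ha0 : ∀ k, 0 < a k := fun k => by simp only [hadef]; linarith [hga k]
  have ha1 : ∀ k, a k ≤ 1 := fun k => by
    simp only [hadef]; linarith [hgnonneg _ (mul_nonneg (hrp k) hd0nn)]
  set Cs : ℕ → Set (X × X) := fun k => {p | dist p.1 p.2 ≤ r ^ k * d0} with hCsdef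
  have hCs : ∀ k, MeasurableSet (Cs k) := fun k => hmeas_dist _
  set B : ℕ → Set (ℕ → X × X) := fun n => {ω | ∀ k ≤ n, ω k ∈ Cs k} with hBdef
  have hBF : ∀ n, MeasurableSet[natFiltration (X × X) n] (B n) := by
    intro n
    have hBeq : B n = ⋂ k, ⋂ (_ : k ≤ n), (fun ω : ℕ → X × X => ω k) ⁻¹' Cs k := by
      ext ω; simp [hBdef, Set.mem_iInter]
    rw [hBeq]
    exact MeasurableSet.iInter fun k => MeasurableSet.iInter fun hk =>
      measurableSet_natFiltration hk (hCs k)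
  have hBm : ∀ n, MeasurableSet (B n) := fun n => natFiltration_le _ n _ (hBF n)
  have hB0 : Pz (B 0) = 1 := by
    have hBeq : B 0 = (fun ω : ℕ → X × X => ω 0) ⁻¹' Cs 0 := by
      ext ω
      simp only [hBdef, Set.mem_setOf_eq, Set.mem_preimage, Nat.le_zero]
      exact ⟨fun h => h 0 rfl, fun h k hk => hk ▸ h⟩
    rw [hBeq, ← Measure.map_apply (measurable_pi_apply 0) (hCs 0), hinit]
    rw [Measure.dirac_apply' _ (hCs 0)]
    have : (x, x') ∈ Cs 0 := by simp [hCsdef, hd0def]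
    simp [this]
  -- one step of the Markov chain
  have step : ∀ n, a n * (Pz (B n)).toReal ≤ (Pz (B (n + 1))).toReal := by
    intro n
    have hBsucc : B (n + 1) = B n ∩ {ω | ω (n + 1) ∈ Cs (n + 1)} := by
      ext ω
      simp only [hBdef, Set.mem_setOf_eq, Set.mem_inter_iff]
      constructor
      · exact fun h => ⟨fun k hk => h k (hk.trans (Nat.le_succ n)), h (n + 1) le_rfl⟩
      · rintro ⟨h1, h2⟩ k hk
        rcases Nat.le_succ_iff.mp hk with h | h
        · exact h1 k h
        · exact h ▸ h2
    have hms := markov_step Q Pz hMarkov n (hCs (n + 1)) (hBF n)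
    rw [hBsucc, hms]
    have hpt : ∀ ω ∈ B n, a n ≤ (Q (ω n) (Cs (n + 1))).toReal := by
      intro ω hω
      have hdω : dist (ω n).1 (ω n).2 ≤ r ^ n * d0 := hω n le_rfl
      have hdωδ : dist (ω n).1 (ω n).2 ≤ δ := hdω.trans (hkd0δ n)
      have hsub : {p : X × X | dist p.1 p.2 ≤ r * dist (ω n).1 (ω n).2} ⊆ Cs (n + 1) := by
        intro p hp
        simp only [hCsdef, Set.mem_setOf_eq] at hp ⊢
        calc dist p.1 p.2 ≤ r * dist (ω n).1 (ω n).2 := hp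
          _ ≤ r * (r ^ n * d0) := mul_le_mul_of_nonneg_left hdω hr0
          _ = r ^ (n + 1) * d0 := by ring
      have hQ1 : ENNReal.ofReal (1 - g (dist (ω n).1 (ω n).2)) ≤ Q (ω n) (Cs (n + 1)) :=
        (hQ (ω n) hdωδ).trans (measure_mono hsub)
      have hgm : g (dist (ω n).1 (ω n).2) ≤ g (r ^ n * d0) :=
        hgmono dist_nonneg (mul_nonneg (hrp n) hd0nn) hdω
      have h2 : a n ≤ 1 - g (dist (ω n).1 (ω n).2) := by simp only [hadef]; linarith
      exact h2.trans ((ENNReal.ofReal_le_iff_le_toReal (measure_ne_top _ _)).mp hQ1)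
    calc a n * (Pz (B n)).toReal = ∫ _ω in B n, a n ∂Pz := by
          rw [setIntegral_const, smul_eq_mul, mul_comm]; rfl
      _ ≤ ∫ ω in B n, (Q (ω n) (Cs (n + 1))).toReal ∂Pz :=
          setIntegral_mono_on (integrable_const _).integrableOn
            (integrable_kernel_toReal Q Pz n (hCs (n + 1))).integrableOn (hBm n) hpt
  have key : ∀ n, ∏ k ∈ Finset.range n, a k ≤ (Pz (B n)).toReal := by
    intro n
    induction n with
    | zero => simp [hB0]
    | succ n ih =>
      rw [Finset.prod_range_succ]
      calc (∏ k ∈ Finset.range n, a k) * a n ≤ (Pz (B n)).toReal * a n :=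
            mul_le_mul_of_nonneg_right ih (ha0 n).le
        _ = a n * (Pz (B n)).toReal := mul_comm _ _
        _ ≤ (Pz (B (n + 1))).toReal := step n
  -- multipliability
  have hbdd : BddBelow (Set.range fun s : Finset ℕ => ∏ k ∈ s, a k) := by
    refine ⟨0, ?_⟩
    rintro _ ⟨s, rfl⟩
    exact Finset.prod_nonneg fun i _ => (ha0 i).le
  have hanti : Antitone fun s : Finset ℕ => ∏ k ∈ s, a k := by
    intro s t hst
    calc ∏ k ∈ t, a k = (∏ k ∈ t \ s, a k) * ∏ k ∈ s, a k := (Finset.prod_sdiff hst).symm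
      _ ≤ 1 * ∏ k ∈ s, a k :=
          mul_le_mul_of_nonneg_right
            (Finset.prod_le_one (fun i _ => (ha0 i).le) (fun i _ => ha1 i))
            (Finset.prod_nonneg fun i _ => (ha0 i).le)
      _ = ∏ k ∈ s, a k := one_mul _
  have hprod : HasProd a (⨅ s : Finset ℕ, ∏ k ∈ s, a k) := tendsto_atTop_ciInf hanti hbdd
  have htp : ∏' k, a k = ⨅ s : Finset ℕ, ∏ k ∈ s, a k := hprod.tprod_eq
  have htple : ∀ n, (∏' k, a k) ≤ ∏ k ∈ Finset.range n, a k := fun n =>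
    htp ▸ ciInf_le hbdd (Finset.range n)
  constructor
  · -- part 1
    have hiInter : Pz (⋂ n, B n) = ⨅ n, Pz (B n) := by
      refine Directed.measure_iInter (fun n => (hBm n).nullMeasurableSet) ?_
        ⟨0, measure_ne_top _ _⟩
      have hBanti : Antitone B := fun m n h ω hω k hk => hω k (hk.trans h)
      exact hBanti.directed_ge
    have hsub : (⋂ n, B n) ⊆ {ω : ℕ → X × X | ∀ n, dist (ω n).1 (ω n).2 ≤ r ^ n * δ} := by
      intro ω hω n
      have := (Set.mem_iInter.mp hω n) n le_rfl
      simp only [hCsdef, Set.mem_setOf_eq] at this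
      calc dist (ω n).1 (ω n).2 ≤ r ^ n * d0 := this
        _ ≤ r ^ n * δ := mul_le_mul_of_nonneg_left hd (hrp n)
    calc ENNReal.ofReal (∏' k, (1 - g (r ^ k * d0))) ≤ ⨅ n, Pz (B n) :=
          le_iInf fun n => ENNReal.ofReal_le_of_le_toReal ((htple n).trans (key n))
      _ = Pz (⋂ n, B n) := hiInter.symm
      _ ≤ Pz {ω | ∀ n : ℕ, dist (ω n).1 (ω n).2 ≤ r ^ n * δ} := measure_mono hsub
  · -- part 2
    intro n hn
    obtain ⟨m, rfl⟩ : ∃ m, n = m + 1 := ⟨n - 1, (Nat.succ_pred_eq_of_pos hn).symm⟩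
    simp only [Nat.add_sub_cancel]
    set F : Set (ℕ → X × X) := {ω | ∀ k ≤ m, dist (ω k).1 (ω k).2 ≤ r ^ k * δ} with hFdef
    set C : Set (X × X) := {p | dist p.1 p.2 ≤ r ^ (m + 1) * δ} with hCdef
    have hCm : MeasurableSet C := hmeas_dist _
    have hFF : MeasurableSet[natFiltration (X × X) m] F := by
      have hFeq : F = ⋂ k, ⋂ (_ : k ≤ m),
          (fun ω : ℕ → X × X => ω k) ⁻¹' {p : X × X | dist p.1 p.2 ≤ r ^ k * δ} := by
        ext ω; simp [hFdef, Set.mem_iInter]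
      rw [hFeq]
      exact MeasurableSet.iInter fun k => MeasurableSet.iInter fun hk =>
        measurableSet_natFiltration hk (hmeas_dist _)
    have hFm : MeasurableSet F := natFiltration_le _ m _ hFF
    have hA : MeasurableSet {ω : ℕ → X × X | ω (m + 1) ∈ C} :=
      measurable_pi_apply (m + 1) hCm
    have hDeq : {ω : ℕ → X × X | r ^ (m + 1) * δ < dist (ω (m + 1)).1 (ω (m + 1)).2 ∧
        ∀ k < m + 1, dist (ω k).1 (ω k).2 ≤ r ^ k * δ}
        = F \ {ω | ω (m + 1) ∈ C} := by
      ext ω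
      simp only [Set.mem_setOf_eq, Set.mem_diff, hFdef, hCdef, not_le, Nat.lt_succ_iff]
      tauto
    rw [hDeq]
    have hsplit : Pz (F ∩ {ω | ω (m + 1) ∈ C}) + Pz (F \ {ω | ω (m + 1) ∈ C}) = Pz F :=
      measure_inter_add_diff F hA
    have hsplitR : (Pz (F ∩ {ω | ω (m + 1) ∈ C})).toReal
        + (Pz (F \ {ω | ω (m + 1) ∈ C})).toReal = (Pz F).toReal := by
      rw [← ENNReal.toReal_add (measure_ne_top _ _) (measure_ne_top _ _), hsplit]
    have hgmnn : 0 ≤ g (r ^ m) := hgnonneg _ (hrp m)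
    -- lower bound on Pz (F ∩ A)
    have hlow : (1 - g (r ^ m)) * (Pz F).toReal ≤ (Pz (F ∩ {ω | ω (m + 1) ∈ C})).toReal := by
      rw [markov_step Q Pz hMarkov m hCm hFF]
      have hpt : ∀ ω ∈ F, (1 - g (r ^ m)) ≤ (Q (ω m) C).toReal := by
        intro ω hω
        have hdω : dist (ω m).1 (ω m).2 ≤ r ^ m * δ := hω m le_rfl
        have hrmδ : r ^ m * δ ≤ δ :=
          (mul_le_mul_of_nonneg_right (hrle1 m) hδ0.le).trans_eq (one_mul δ)
        have hdωδ : dist (ω m).1 (ω m).2 ≤ δ := hdω.trans hrmδ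
        have hsub : {p : X × X | dist p.1 p.2 ≤ r * dist (ω m).1 (ω m).2} ⊆ C := by
          intro p hp
          simp only [hCdef, Set.mem_setOf_eq] at hp ⊢
          calc dist p.1 p.2 ≤ r * dist (ω m).1 (ω m).2 := hp
            _ ≤ r * (r ^ m * δ) := mul_le_mul_of_nonneg_left hdω hr0
            _ = r ^ (m + 1) * δ := by ring
        have hQ1 : ENNReal.ofReal (1 - g (dist (ω m).1 (ω m).2)) ≤ Q (ω m) C :=
          (hQ (ω m) hdωδ).trans (measure_mono hsub)
        have hgm1 : g (dist (ω m).1 (ω m).2) ≤ g (r ^ m * δ) :=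
          hgmono dist_nonneg (mul_nonneg (hrp m) hδ0.le) hdω
        have hgm2 : g (r ^ m * δ) ≤ g (r ^ m) :=
          hgmono (mul_nonneg (hrp m) hδ0.le) (hrp m)
            ((mul_le_mul_of_nonneg_left hδ1 (hrp m)).trans_eq (mul_one _))
        have h2 : 1 - g (r ^ m) ≤ 1 - g (dist (ω m).1 (ω m).2) := by linarith
        exact h2.trans ((ENNReal.ofReal_le_iff_le_toReal (measure_ne_top _ _)).mp hQ1)
      calc (1 - g (r ^ m)) * (Pz F).toReal = ∫ _ω in F, (1 - g (r ^ m)) ∂Pz := by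
            rw [setIntegral_const, smul_eq_mul, mul_comm]; rfl
        _ ≤ ∫ ω in F, (Q (ω m) C).toReal ∂Pz :=
            setIntegral_mono_on (integrable_const _).integrableOn
              (integrable_kernel_toReal Q Pz m hCm).integrableOn hFm hpt
    have hPF1 : (Pz F).toReal ≤ 1 := by
      have := prob_le_one (μ := Pz) (s := F)
      exact (ENNReal.toReal_mono ENNReal.one_ne_top this).trans_eq ENNReal.toReal_one
    have hfinal : (Pz (F \ {ω | ω (m + 1) ∈ C})).toReal ≤ g (r ^ m) := by
      have h1 : (Pz (F \ {ω | ω (m + 1) ∈ C})).toReal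
          ≤ (Pz F).toReal - (1 - g (r ^ m)) * (Pz F).toReal := by linarith
      have h2 : (Pz F).toReal - (1 - g (r ^ m)) * (Pz F).toReal
          = g (r ^ m) * (Pz F).toReal := by ring
      rw [h2] at h1
      exact h1.trans ((mul_le_of_le_one_right hgmnn hPF1))
    calc Pz (F \ {ω | ω (m + 1) ∈ C})
        = ENNReal.ofReal (Pz (F \ {ω | ω (m + 1) ∈ C})).toReal :=
          (ENNReal.ofReal_toReal (measure_ne_top _ _)).symm
      _ ≤ ENNReal.ofReal (g (r ^ m)) := ENNReal.ofReal_le_ofReal hfinal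
end
end
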